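/- arXiv:1411.4029 — 4 statements merged into one kernel-verified Lean document; each statement's English description precedes it below -/
import Mathlib

section
/- Let H be a finite graph with three distinct vertices a, b, c such that a is adjacent to b and b is adjacent to c. Then the number of graph homomorphisms from the box B_n = [-n,n]^d (with nearest-neighbour adjacency in Z^d) to H is at least 2^(⌊(2n+1)^d/2⌋) + 2^(⌈(2n+1)^d/2⌉); consequently the topological entropy of the hom-shift X_H is at least (log 2)/2. -/
open Filter

/-- `Zd d` is the group `ℤ^d`, identified with its standard Cayley graph. -/
abbrev Zd (d : ℕ) := Fin d → ℤ

/-- Nearest-neighbour adjacency in `ℤ^d`: `i ~ j` iff `‖i - j‖₁ = 1`. -/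
def adjZ {d : ℕ} (i j : Zd d) : Prop := (∑ k, (i k - j k).natAbs) = 1

/-- The hom-shift `X_H`: the set of graph homomorphisms from `ℤ^d` to `H`. -/
def homShift (d : ℕ) {V : Type*} (H : SimpleGraph V) : Set (Zd d → V) :=
  {x | ∀ i j : Zd d, adjZ i j → H.Adj (x i) (x j)}

/-- The `l^∞` box `B_n = [-n, n]^d` in `ℤ^d`. -/
def box (d n : ℕ) : Set (Zd d) := {i | ∀ k, (i k).natAbs ≤ n}

/-- Globally allowed patterns of `X_H` on the box `B_n`. -/
def boxPatterns (d n : ℕ) {V : Type*} (H : SimpleGraph V) : Set (box d n → V) :=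
  {a | ∃ x ∈ homShift d H, ∀ i : box d n, x i.1 = a i}

/-!
Colour `ℤ^d` like a chessboard by the parity of the coordinate sum, so that every edge joins
the two colours. Putting `b` on one colour class and an arbitrary choice of `a` or `c` on the
other gives a graph homomorphism, since `a ∼ b ∼ c`. Restricted to `B_n` this yields
`2^E + 2^O` distinct patterns, where `E + O = (2n+1)^d` are the sizes of the two classes in
`B_n`; by convexity of `2^x` this is at least `2^⌊N/2⌋ + 2^⌈N/2⌉`. As `2^⌈N/2⌉ ≥ 2^(N/2)`, every
term of the entropy sequence is already at least `(log 2)/2`.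
-/

lemma even_sum_natAbs_iff {ι : Type*} (s : Finset ι) (f : ι → ℤ) :
    Even (∑ k ∈ s, (f k).natAbs) ↔ Even (∑ k ∈ s, f k) := by
  induction s using Finset.cons_induction with
  | empty => simp
  | cons k s hk ih => simp [Finset.sum_cons, Nat.even_add, Int.even_add, ih]

def evenSites (d : ℕ) : Set (Zd d) := {i | Even (∑ k, i k)}

lemma adjZ.mem_evenSites_iff_notMem {d : ℕ} {i j : Zd d} (h : adjZ i j) :
    i ∈ evenSites d ↔ j ∉ evenSites d := by
  have hdiff : ¬ Even (∑ k, i k - ∑ k, j k) := by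
    rw [← Finset.sum_sub_distrib, ← even_sum_natAbs_iff, show _ = 1 from h]
    decide
  rw [Int.even_sub] at hdiff
  change Even _ ↔ ¬ Even _
  tauto

lemma adjZ.mem_evenSites_compl_iff_notMem {d : ℕ} {i j : Zd d} (h : adjZ i j) :
    i ∈ (evenSites d)ᶜ ↔ j ∉ (evenSites d)ᶜ := by
  simp only [Set.mem_compl_iff, h.mem_evenSites_iff_notMem, not_not]

open Classical in
noncomputable def checkerboard {d : ℕ} {V : Type*} (a b c : V) (C S : Set (Zd d)) (i : Zd d) :
    V :=
  if i ∈ C then (if i ∈ S then a else c) else b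

lemma checkerboard_mem_homShift {d : ℕ} {V : Type*} {H : SimpleGraph V} {a b c : V}
    (hab : H.Adj a b) (hbc : H.Adj b c) {C : Set (Zd d)}
    (hC : ∀ i j, adjZ i j → (i ∈ C ↔ j ∉ C)) (S : Set (Zd d)) :
    checkerboard a b c C S ∈ homShift d H := by
  have hside : ∀ i ∈ C, H.Adj (checkerboard a b c C S i) b := fun i hi => by
    by_cases hS : i ∈ S <;> simp [checkerboard, hi, hS, hab, hbc.symm]
  intro i j hij
  by_cases hi : i ∈ C
  · have hj : j ∉ C := (hC i j hij).mp hi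
    simpa [checkerboard, hj] using hside i hi
  · have hj : j ∈ C := by simpa using mt (hC i j hij).mpr hi
    simpa [checkerboard, hi] using (hside j hj).symm

lemma box_eq_piFinset (d n : ℕ) :
    box d n = ↑(Fintype.piFinset fun _ : Fin d => Finset.Icc (-(n : ℤ)) n) := by
  ext i
  simp only [box, Set.mem_ofPred_eq, Fintype.coe_piFinset, Set.mem_pi, Set.mem_univ,
    Finset.coe_Icc, Set.mem_Icc, true_implies]
  exact forall_congr' fun k => by omega

instance (d n : ℕ) : Finite (box d n) := by
  rw [box_eq_piFinset]
  infer_instance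

lemma card_box (d n : ℕ) : Nat.card (box d n) = (2 * n + 1) ^ d := by
  rw [box_eq_piFinset, Nat.card_coe_set_eq, Set.ncard_coe_finset, Fintype.card_piFinset]
  simp only [Int.card_Icc, Finset.prod_const, Finset.card_univ, Fintype.card_fin]
  congr 1
  omega

lemma card_box_even_add_card_box_odd (d n : ℕ) :
    Nat.card ↥(box d n ∩ evenSites d) + Nat.card ↥(box d n ∩ (evenSites d)ᶜ) =
      (2 * n + 1) ^ d := by
  rw [← card_box d n, Nat.card_coe_set_eq, Nat.card_coe_set_eq, Nat.card_coe_set_eq,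
    ← Set.sdiff_eq, Set.ncard_inter_add_ncard_sdiff_eq_ncard _ _ (Set.toFinite _)]

lemma two_pow_half_add_two_pow_half_le_of_le {E O : ℕ} (h : O ≤ E) :
    2 ^ ((E + O) / 2) + 2 ^ ((E + O + 1) / 2) ≤ 2 ^ E + 2 ^ O := by
  obtain ⟨t, hO⟩ : ∃ t, (E + O) / 2 = O + t := ⟨(E + O) / 2 - O, by omega⟩
  have hE : E = (E + O + 1) / 2 + t := by omega
  have hmid : 2 ^ O ≤ 2 ^ ((E + O + 1) / 2) := Nat.pow_le_pow_right two_pos (by omega)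
  have ht : 1 ≤ 2 ^ t := Nat.one_le_two_pow
  calc 2 ^ ((E + O) / 2) + 2 ^ ((E + O + 1) / 2)
      = 2 ^ O * 2 ^ t + 2 ^ ((E + O + 1) / 2) := by rw [hO, pow_add]
    _ ≤ 2 ^ ((E + O + 1) / 2) * 2 ^ t + 2 ^ O := by nlinarith
    _ = 2 ^ E + 2 ^ O := by rw [← pow_add, ← hE]

lemma two_pow_half_add_two_pow_half_le (E O : ℕ) :
    2 ^ ((E + O) / 2) + 2 ^ ((E + O + 1) / 2) ≤ 2 ^ E + 2 ^ O := by
  rcases le_total O E with h | h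
  · exact two_pow_half_add_two_pow_half_le_of_le h
  · rw [add_comm E, add_comm (2 ^ E)]
    exact two_pow_half_add_two_pow_half_le_of_le h

lemma Nat.card_set (α : Type*) [Finite α] : Nat.card (Set α) = 2 ^ Nat.card α := by
  rw [Set, Nat.card_fun]
  simp

section Checkerboard

variable {d n : ℕ} {V : Type*} {a b c : V}

noncomputable def checkerboardPattern (a b c : V) (C : Set (Zd d)) (S : Set ↥(box d n ∩ C)) :
    box d n → V :=
  fun i => checkerboard a b c C (Subtype.val '' S) i

lemma checkerboardPattern_injective (hac : a ≠ c) (C : Set (Zd d)) :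
    (checkerboardPattern (n := n) a b c C).Injective := by
  intro S T hST
  ext s
  have h := congrFun hST ⟨s, s.2.1⟩
  simp only [checkerboardPattern, checkerboard, if_pos s.2.2] at h
  rw [Subtype.val_injective.mem_set_image, Subtype.val_injective.mem_set_image] at h
  split_ifs at h with hS hT hT <;> simp_all

lemma checkerboardPattern_of_notMem {C : Set (Zd d)} (S : Set ↥(box d n ∩ C))
    {i : box d n} (hi : i.1 ∉ C) : checkerboardPattern a b c C S i = b := by
  simp [checkerboardPattern, checkerboard, hi]

lemma checkerboardPattern_ne_of_mem (hab : a ≠ b) (hcb : c ≠ b) {C : Set (Zd d)}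
    (S : Set ↥(box d n ∩ C)) {i : box d n} (hi : i.1 ∈ C) :
    checkerboardPattern a b c C S i ≠ b := by
  unfold checkerboardPattern checkerboard
  split_ifs <;> assumption

lemma checkerboardPattern_mem_boxPatterns {H : SimpleGraph V} (hab : H.Adj a b)
    (hbc : H.Adj b c) {C : Set (Zd d)} (hC : ∀ i j, adjZ i j → (i ∈ C ↔ j ∉ C))
    (S : Set ↥(box d n ∩ C)) : checkerboardPattern a b c C S ∈ boxPatterns d n H :=
  ⟨_, checkerboard_mem_homShift hab hbc hC _, fun _ => rfl⟩

-- The two families are told apart at the origin, where one shows `b` and the other does not.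
lemma injective_sumElim_checkerboardPattern (hab : a ≠ b) (hcb : c ≠ b) (hac : a ≠ c) :
    (Sum.elim (checkerboardPattern (n := n) a b c (evenSites d))
      (checkerboardPattern a b c (evenSites d)ᶜ)).Injective := by
  refine (checkerboardPattern_injective hac _).sumElim (checkerboardPattern_injective hac _) ?_
  intro S T hST
  let o : box d n := ⟨0, fun k => by simp⟩
  have ho : o.1 ∈ evenSites d := by simp [o, evenSites]
  exact checkerboardPattern_ne_of_mem hab hcb S ho <|
    (congrFun hST o).trans (checkerboardPattern_of_notMem T (not_not.mpr ho))

end Checkerboard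

theorem two_pow_add_two_pow_le_card_boxPatterns {d : ℕ} {V : Type*} [Finite V]
    {H : SimpleGraph V} {a b c : V} (hab : H.Adj a b) (hbc : H.Adj b c) (hac : a ≠ c)
    (n : ℕ) :
    2 ^ ((2 * n + 1) ^ d / 2) + 2 ^ (((2 * n + 1) ^ d + 1) / 2) ≤
      Nat.card (boxPatterns d n H) := by
  have hmem : ∀ x, Sum.elim (checkerboardPattern (n := n) a b c (evenSites d))
      (checkerboardPattern a b c (evenSites d)ᶜ) x ∈ boxPatterns d n H := by
    rintro (S | S)
    · exact checkerboardPattern_mem_boxPatterns hab hbc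
        (fun _ _ h => h.mem_evenSites_iff_notMem) S
    · exact checkerboardPattern_mem_boxPatterns hab hbc
        (fun _ _ h => h.mem_evenSites_compl_iff_notMem) S
  calc 2 ^ ((2 * n + 1) ^ d / 2) + 2 ^ (((2 * n + 1) ^ d + 1) / 2)
      ≤ Nat.card (Set ↥(box d n ∩ evenSites d) ⊕ Set ↥(box d n ∩ (evenSites d)ᶜ)) := by
        rw [Nat.card_sum, Nat.card_set, Nat.card_set, ← card_box_even_add_card_box_odd]
        exact two_pow_half_add_two_pow_half_le _ _
    _ ≤ Nat.card (boxPatterns d n H) :=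
        Nat.card_le_card_of_injective _ <| (Set.injective_codRestrict hmem).mpr <|
          injective_sumElim_checkerboardPattern hab.ne hbc.ne' hac

lemma card_boxPatterns_le {d n : ℕ} {V : Type*} [Finite V] (H : SimpleGraph V) :
    Nat.card (boxPatterns d n H) ≤
      Nat.card {f : box d n → V // ∀ i j : box d n, adjZ i.1 j.1 → H.Adj (f i) (f j)} := by
  refine Nat.card_le_card_of_injective (fun p => ⟨p.1, fun i j hij => ?_⟩)
    fun p q h => Subtype.ext (congrArg Subtype.val h :)
  obtain ⟨x, hx, hxp⟩ := p.2
  rw [← hxp, ← hxp]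
  exact hx _ _ hij

lemma log_two_div_two_le_log_div {N M : ℕ} (hN : 0 < N) (hM : 2 ^ ((N + 1) / 2) ≤ M) :
    Real.log 2 / 2 ≤ Real.log M / N := by
  have hhalf : (N : ℝ) ≤ 2 * ((N + 1) / 2 : ℕ) := by
    exact_mod_cast (by omega : N ≤ 2 * ((N + 1) / 2))
  rw [div_le_div_iff₀ two_pos (by exact_mod_cast hN)]
  calc Real.log 2 * N ≤ Real.log 2 * (2 * ((N + 1) / 2 : ℕ)) :=
        mul_le_mul_of_nonneg_left hhalf (Real.log_nonneg one_le_two)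
    _ = Real.log ((2 : ℝ) ^ ((N + 1) / 2)) * 2 := by rw [Real.log_pow]; ring
    _ ≤ Real.log M * 2 := by gcongr; exact_mod_cast hM

theorem hom_shift_entropy_lower_bound_general {d : ℕ} {V : Type*} [Fintype V]
    {H : SimpleGraph V} {a b c : V} (hab : H.Adj a b) (hbc : H.Adj b c) (hac : a ≠ c) :
    (∀ n : ℕ,
      2 ^ ((2 * n + 1) ^ d / 2) + 2 ^ (((2 * n + 1) ^ d + 1) / 2) ≤
        Nat.card {f : box d n → V //
          ∀ i j : box d n, adjZ i.1 j.1 → H.Adj (f i) (f j)}) ∧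
    (∀ h : ℝ,
      Tendsto (fun n : ℕ =>
          Real.log (Nat.card (boxPatterns d n H)) / ((2 * (n : ℝ) + 1) ^ d))
        atTop (nhds h) →
      Real.log 2 / 2 ≤ h) := by
  refine ⟨fun n => (two_pow_add_two_pow_le_card_boxPatterns hab hbc hac n).trans
    (card_boxPatterns_le H), fun h htends => ge_of_tendsto' htends fun n => ?_⟩
  have hbound := (Nat.le_add_left _ _).trans
    (two_pow_add_two_pow_le_card_boxPatterns (d := d) hab hbc hac n)
  simpa using log_two_div_two_le_log_div (by positivity) hbound

/-- If `H` has distinct vertices `a ∼ b ∼ c`, then the number of graph homomorphisms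
from `B_n` to `H` is at least `2^⌊(2n+1)^d/2⌋ + 2^⌈(2n+1)^d/2⌉`, and consequently
`h_top(X_H) ≥ (log 2)/2`. -/
theorem hom_shift_entropy_lower_bound {d : ℕ} (hd : 1 ≤ d) {V : Type*} [Fintype V]
    {H : SimpleGraph V} {a b c : V} (hab : H.Adj a b) (hbc : H.Adj b c) (hac : a ≠ c) :
    (∀ n : ℕ,
      2 ^ ((2 * n + 1) ^ d / 2) + 2 ^ (((2 * n + 1) ^ d + 1) / 2) ≤
        Nat.card {f : box d n → V //
          ∀ i j : box d n, adjZ i.1 j.1 → H.Adj (f i) (f j)}) ∧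
    (∀ h : ℝ,
      Tendsto (fun n : ℕ =>
          Real.log (Nat.card (boxPatterns d n H)) / ((2 * (n : ℝ) + 1) ^ d))
        atTop (nhds h) →
      Real.log 2 / 2 ≤ h) :=
  hom_shift_entropy_lower_bound_general hab hbc hac
end

section
/- Let X ⊆ A^{Z^d} be a nearest neighbour shift of finite type, and suppose the symbol v ∈ A config-folds into the symbol w ∈ A (i.e., N_X(v) ⊆ N_X(w), where N_X(u) is the set of boundary patterns on ∂{0} that can surround u in a locally allowed pattern on D_1). Then the map f : X → X that replaces every occurrence of v in a configuration by w is well defined, i.e., for every x ∈ X the configuration f(x) defined by f(x)_i = w if x_i = v and f(x)_i = x_i otherwise, belongs to X. -/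
/-- The standard unit vector `e_j` in `ℤ^d`. -/
def unitVec (d : ℕ) (j : Fin d) : Zd d := fun k => if k = j then 1 else 0

/-- The nearest neighbour shift of finite type determined by the allowed adjacent
pairs `E j` in each coordinate direction `j`. -/
def NNSFT {d : ℕ} {A : Type*} (E : Fin d → Set (A × A)) : Set (Zd d → A) :=
  {x | ∀ i : Zd d, ∀ j : Fin d, (x i, x (i + unitVec d j)) ∈ E j}

/-- `N_X(v)`: the set of boundary patterns on `∂{0}` (recorded as the pair of values
at `+e_j` and `-e_j` for each direction `j`) that can surround the symbol `v` in a
configuration of `X`. -/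
def nbhd {d : ℕ} {A : Type*} (X : Set (Zd d → A)) (v : A) : Set (Fin d → A × A) :=
  {a | ∃ x ∈ X, x 0 = v ∧
    ∀ j : Fin d, x (unitVec d j) = (a j).1 ∧ x (-(unitVec d j)) = (a j).2}

lemma shift_mem {d : ℕ} {A : Type*} (E : Fin d → Set (A × A)) {x : Zd d → A}
    (hx : x ∈ NNSFT E) (i : Zd d) : (fun k => x (k + i)) ∈ NNSFT E := by
  intro i' j
  have := hx (i' + i) j
  simpa [add_right_comm] using this

lemma surround {d : ℕ} {A : Type*} (E : Fin d → Set (A × A)) {v w : A}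
    (h : nbhd (NNSFT E) v ⊆ nbhd (NNSFT E) w) {x : Zd d → A}
    (hx : x ∈ NNSFT E) {i : Zd d} (hv : x i = v) :
    ∃ x' ∈ NNSFT E, x' 0 = w ∧
      ∀ j : Fin d, x' (unitVec d j) = x (i + unitVec d j) ∧
        x' (-(unitVec d j)) = x (i + -(unitVec d j)) := by
  have hmem : (fun j => (x (i + unitVec d j), x (i + -(unitVec d j)))) ∈
      nbhd (NNSFT E) v := by
    refine ⟨fun k => x (k + i), shift_mem E hx i, by simpa using hv, fun j => ?_⟩
    constructor <;> simp [add_comm]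
  obtain ⟨x', hx', h0, hb⟩ := h hmem
  exact ⟨x', hx', h0, hb⟩

/-- If `v` config-folds into `w` in the nearest neighbour SFT `X` (i.e.
`N_X(v) ⊆ N_X(w)`), then replacing every occurrence of `v` by `w` in a configuration
of `X` yields a configuration of `X`. -/
theorem config_fold_map_well_defined {d : ℕ} {A : Type*} [DecidableEq A]
    (E : Fin d → Set (A × A)) (v w : A)
    (h : nbhd (NNSFT E) v ⊆ nbhd (NNSFT E) w) :
    ∀ x ∈ NNSFT E, (fun i : Zd d => if x i = v then w else x i) ∈ NNSFT E := by
  intro x hx i j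
  simp only
  by_cases hi : x i = v <;> by_cases hi' : x (i + unitVec d j) = v <;>
    simp only [hi, hi', if_pos, if_neg, if_true, if_false]
  · -- both v : need (w, w) ∈ E j
    obtain ⟨x', hx', h0, hb⟩ := surround E h hx hi
    have hv' : x' (unitVec d j) = v := by rw [(hb j).1, hi']
    obtain ⟨x'', hx'', h0'', hb''⟩ := surround E h hx' hv'
    have := hx'' (-(unitVec d j)) j
    have hkey : x'' (-(unitVec d j)) = w := by
      have := (hb'' j).2
      simpa [h0] using this
    simpa [hkey, h0''] using this
  · -- x i = v, neighbour not v : (w, x (i+e_j)) ∈ E j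
    obtain ⟨x', hx', h0, hb⟩ := surround E h hx hi
    have := hx' 0 j
    simpa [h0, (hb j).1] using this
  · -- neighbour is v : (x i, w) ∈ E j
    obtain ⟨x', hx', h0, hb⟩ := surround E h hx hi'
    have := hx' (-(unitVec d j)) j
    have hkey : x' (-(unitVec d j)) = x i := by
      have := (hb j).2
      simpa using this
    simpa [hkey, h0] using this
  · exact hx i j
end

section
/- Let H be a connected four-cycle free graph, x, y ∈ X_H with lifts x̃, ỹ ∈ X_{E_H} (π(x̃) = x, π(ỹ) = y). If x̃_{i₀} = ỹ_{i₀} for some i₀ ∈ Z^d, then x̃ and ỹ agree on the entire connected component of the set { j ∈ Z^d : x_j = y_j } containing i₀. -/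
def FourCycleFree {V : Type*} (H : SimpleGraph V) : Prop :=
  ∀ a b c e : V, H.Adj a b → H.Adj b c → H.Adj c e → H.Adj e a → a = c ∨ b = e

def IsGraphCovering {W V : Type*} (T : SimpleGraph W) (H : SimpleGraph V)
    (p : W → V) : Prop :=
  (∀ a b : W, T.Adj a b → H.Adj (p a) (p b)) ∧
    ∀ w : W, Set.BijOn p (T.neighborSet w) (H.neighborSet (p w))

/-- If lifts `x̃, ỹ` of `x, y ∈ X_H` agree at a site `i₀`, then they agree on the
whole connected component (for nearest-neighbour adjacency in `ℤ^d`) of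
`{ j : x j = y j }` containing `i₀`. -/
theorem lifts_agree_on_component {d : ℕ} (hd : 2 ≤ d) {W V : Type*} [Fintype V]
    {H : SimpleGraph V} (hconn : H.Connected) (h4 : FourCycleFree H)
    {T : SimpleGraph W} (hT : T.IsTree) (p : W → V) (hp : IsGraphCovering T H p)
    {x y : Zd d → V} (hx : x ∈ homShift d H) (hy : y ∈ homShift d H)
    {xt yt : Zd d → W} (hxt : xt ∈ homShift d T) (hyt : yt ∈ homShift d T)
    (hpx : ∀ i, p (xt i) = x i) (hpy : ∀ i, p (yt i) = y i)
    (i₀ : Zd d) (h0 : xt i₀ = yt i₀) :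
    ∀ j : Zd d,
      Relation.ReflTransGen
        (fun a b : Zd d => adjZ a b ∧ x a = y a ∧ x b = y b) i₀ j →
      xt j = yt j := by
  intro j h
  induction h with
  | refl => exact h0
  | @tail b c _ hstep ih =>
    obtain ⟨hadj, hxb, hxc⟩ := hstep
    have h1 : T.Adj (xt b) (xt c) := hxt b c hadj
    have h2 : T.Adj (xt b) (yt c) := by
      have := hyt b c hadj
      rwa [← ih] at this
    refine (hp.2 (xt b)).injOn h1 h2 ?_
    rw [hpx, hpy, hxc]
end

section
/- Let H be a connected four-cycle free graph and μ an ergodic shift-invariant measure on X_H such that for some coordinate direction e_k, the slope sl_{e_k}(x) = lim_n (1/n) h_x(0, n e_k) equals 1 almost everywhere. Then h_x(i, i + m e_k) = m for all i ∈ Z^d and m ∈ N, μ-almost everywhere. -/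
/-!
Four-cycle freeness lets every square of `ℤᵈ` lift to the covering tree `T`, so each
`x ∈ X_H` lifts to a homomorphism `ℤᵈ → T`, and `h_x` is the tree distance between lifted
values: it is subadditive, shift-equivariant and `1`-Lipschitz. By shift invariance of `μ`,
`n ↦ ∫ h_x(0, n e_k) dμ` is then a subadditive sequence bounded by `n`; by Fekete's lemma and
dominated convergence its slope equals the a.e. slope `1`, so `∫ h_x(0, m e_k) dμ ≥ m` for
every `m`, which together with `h_x(0, m e_k) ≤ m` forces `h_x(0, m e_k) = m` a.e. Shift
invariance moves the base point from `0` to any `i`.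
-/

open Filter MeasureTheory

def shiftZd (d : ℕ) {A : Type*} (v : Zd d) (x : Zd d → A) : Zd d → A :=
  fun i => x (i + v)

section Lattice

variable {d : ℕ}

lemma adjZ_add_right {i j : Zd d} (v : Zd d) : adjZ (i + v) (j + v) ↔ adjZ i j := by
  simp [adjZ]

lemma adjZ_add_smul_unitVec (i : Zd d) (a : Fin d) {s : ℤ} (hs : s.natAbs = 1) :
    adjZ i (i + s • unitVec d a) := by
  simp [adjZ, unitVec, apply_ite Int.natAbs, hs]

lemma adjZ.exists_eq_add_unitVec {i j : Zd d} (h : adjZ i j) :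
    ∃ a, j = i + unitVec d a ∨ i = j + unitVec d a := by
  obtain ⟨a, ha⟩ : ∃ a, (i a - j a).natAbs ≠ 0 := by
    by_contra! h0
    simp [adjZ, h0] at h
  have hsplit := Finset.add_sum_erase Finset.univ (fun c => (i c - j c).natAbs)
    (Finset.mem_univ a)
  rw [adjZ] at h
  rw [h] at hsplit
  have hrest : ∀ c, c ≠ a → i c = j c := fun c hc => by
    have := Finset.sum_eq_zero_iff.mp (by omega : ∑ c ∈ Finset.univ.erase a,
      (i c - j c).natAbs = 0) c (Finset.mem_erase.mpr ⟨hc, Finset.mem_univ c⟩)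
    omega
  refine ⟨a, ?_⟩
  rcases Int.natAbs_eq_iff.mp (by omega : (i a - j a).natAbs = 1) with h1 | h1
  · right
    funext c
    by_cases hc : c = a
    · subst hc; simp [unitVec]; omega
    · simp [unitVec, hc, hrest c hc]
  · left
    funext c
    by_cases hc : c = a
    · subst hc; simp [unitVec]; omega
    · simp [unitVec, hc, hrest c hc]

variable {V : Type*} {G : SimpleGraph V} {x : Zd d → V}

lemma homShift.adj_add_smul_unitVec (hx : x ∈ homShift d G) (i : Zd d) (a : Fin d) {s : ℤ}
    (hs : s.natAbs = 1) : G.Adj (x i) (x (i + s • unitVec d a)) :=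
  hx _ _ (adjZ_add_smul_unitVec i a hs)

lemma homShift.adj_add_unitVec (hx : x ∈ homShift d G) (i : Zd d) (a : Fin d) :
    G.Adj (x i) (x (i + unitVec d a)) := by
  simpa using homShift.adj_add_smul_unitVec hx i a (s := 1) rfl

lemma shiftZd_mem_homShift (hx : x ∈ homShift d G) (v : Zd d) : shiftZd d v x ∈ homShift d G :=
  fun _ _ hij => hx _ _ ((adjZ_add_right v).mpr hij)

lemma measurableSet_homShift [Countable V] [MeasurableSpace V] [DiscreteMeasurableSpace V] :
    MeasurableSet (homShift d G) := by
  have : homShift d G = ⋂ (i : Zd d) (j : Zd d) (_ : adjZ i j),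
      (fun x : Zd d → V => (x i, x j)) ⁻¹' {q | G.Adj q.1 q.2} := by
    ext x; simp [homShift]
  rw [this]
  exact .iInter fun i => .iInter fun j => .iInter fun _ =>
    ((measurable_pi_apply i).prodMk (measurable_pi_apply j)) .of_discrete

lemma measurable_shiftZd [MeasurableSpace V] (v : Zd d) :
    Measurable (shiftZd d v : (Zd d → V) → Zd d → V) :=
  measurable_pi_lambda _ fun i => measurable_pi_apply (i + v)

end Lattice

namespace IsGraphCovering

variable {W V : Type*} {T : SimpleGraph W} {H : SimpleGraph V} {p : W → V}
  (hp : IsGraphCovering T H p) {w u : W} {v : V}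

open scoped Classical in
/-- The unique neighbour of `w` lying over `v` (junk value `w` if `v` is not adjacent to `p w`). -/
noncomputable def liftAdj (w : W) (v : V) : W :=
  if h : H.Adj (p w) v then Classical.choose ((hp.2 w).surjOn h) else w

lemma adj_liftAdj (h : H.Adj (p w) v) : T.Adj w (hp.liftAdj w v) := by
  rw [liftAdj, dif_pos h]
  exact (Classical.choose_spec ((hp.2 w).surjOn h)).1

lemma apply_liftAdj (h : H.Adj (p w) v) : p (hp.liftAdj w v) = v := by
  rw [liftAdj, dif_pos h]
  exact (Classical.choose_spec ((hp.2 w).surjOn h)).2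

lemma liftAdj_eq (h : T.Adj w u) : hp.liftAdj w (p u) = u :=
  have hadj : H.Adj (p w) (p u) := hp.1 w u h
  (hp.2 w).injOn (hp.adj_liftAdj hadj) h (hp.apply_liftAdj hadj)

lemma liftAdj_liftAdj_self (h : H.Adj (p w) v) : hp.liftAdj (hp.liftAdj w v) (p w) = w :=
  hp.liftAdj_eq (hp.adj_liftAdj h).symm

/-- In a four-cycle free graph every square `p w, v₁, v, v₂` degenerates, so both ways
around it lift to the same endpoint. -/
lemma liftAdj_liftAdj_comm (h4 : FourCycleFree H) {v₁ v₂ : V} (h₁ : H.Adj (p w) v₁)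
    (h₁' : H.Adj v₁ v) (h₂ : H.Adj (p w) v₂) (h₂' : H.Adj v₂ v) :
    hp.liftAdj (hp.liftAdj w v₁) v = hp.liftAdj (hp.liftAdj w v₂) v := by
  rcases h4 (p w) v₁ v v₂ h₁ h₁' h₂'.symm h₂.symm with rfl | rfl
  · rw [hp.liftAdj_liftAdj_self h₁, hp.liftAdj_liftAdj_self h₂]
  · rfl

lemma surjective (hp : IsGraphCovering T H p) [Nonempty W] (hH : H.Preconnected) :
    Function.Surjective p := by
  have lift_walk : ∀ {a b : V}, H.Walk a b → ∀ w, p w = a → ∃ w', p w' = b := by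
    intro a b q
    induction q with
    | nil => exact fun w hw => ⟨w, hw⟩
    | cons hadj _ ih =>
      intro w hw
      exact ih _ (hp.apply_liftAdj (hw ▸ hadj))
  intro b
  obtain ⟨w⟩ := ‹Nonempty W›
  exact lift_walk (hH (p w) b).some w rfl

noncomputable def pathLift (w₀ : W) (c : ℕ → V) : ℕ → W
  | 0 => w₀
  | n + 1 => hp.liftAdj (pathLift w₀ c n) (c (n + 1))

lemma pathLift_congr (w₀ : W) {c c' : ℕ → V} {n : ℕ} (h : ∀ j ≤ n, c j = c' j) :
    hp.pathLift w₀ c n = hp.pathLift w₀ c' n := by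
  induction n with
  | zero => rfl
  | succ n ih =>
    simp only [pathLift]
    rw [ih fun j hj => h j (by omega), h (n + 1) le_rfl]

lemma eq_pathLift {y : ℕ → W} (hy : ∀ n, T.Adj (y n) (y (n + 1))) (n : ℕ) :
    y n = hp.pathLift (y 0) (p ∘ y) n := by
  induction n with
  | zero => rfl
  | succ n ih =>
    rw [pathLift, ← ih, Function.comp_apply, hp.liftAdj_eq (hy n)]

end IsGraphCovering

section LatticePath

variable {d : ℕ} {i : Zd d} {a b : Fin d}

def IsLastNonzero (i : Zd d) (b : Fin d) : Prop :=
  i b ≠ 0 ∧ ∀ c, b < c → i c = 0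

lemma IsLastNonzero.le {c : Fin d} (hb : IsLastNonzero i b) (hc : i c ≠ 0) : c ≤ b :=
  not_lt.mp fun h => hc (hb.2 c h)

lemma IsLastNonzero.unique {b' : Fin d} (hb : IsLastNonzero i b) (hb' : IsLastNonzero i b') :
    b = b' :=
  le_antisymm (hb'.le hb.1) (hb.le hb'.1)

lemma IsLastNonzero.ne_zero (hb : IsLastNonzero i b) : i ≠ 0 :=
  fun h => hb.1 (by simp [h])

lemma IsLastNonzero.add_unitVec (hb : IsLastNonzero i b) (hab : a < b) :
    IsLastNonzero (i + unitVec d a) b :=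
  ⟨by simpa [unitVec, hab.ne'] using hb.1,
    fun c hc => by simp [unitVec, (hab.trans hc).ne', hb.2 c hc]⟩

lemma exists_isLastNonzero (hi : i ≠ 0) : ∃ b, IsLastNonzero i b := by
  obtain ⟨a, ha⟩ := Function.ne_iff.mp hi
  have hne : (Finset.univ.filter (i · ≠ 0)).Nonempty := ⟨a, by simpa using ha⟩
  refine ⟨_, by simpa using Finset.max'_mem _ hne, fun c hc => ?_⟩
  by_contra h
  exact (Finset.le_max' _ c (by simpa using h)).not_gt hc

open scoped Classical in
/-- The predecessor of `i ≠ 0` on the lattice path from `0` to `i` that runs through the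
coordinate directions in increasing order: the last nonzero coordinate moves one step
towards `0`. -/
noncomputable def latticePred (i : Zd d) : Zd d :=
  if h : ∃ b, IsLastNonzero i b then i - (i h.choose).sign • unitVec d h.choose else i

lemma latticePred_eq (hb : IsLastNonzero i b) :
    latticePred i = i - (i b).sign • unitVec d b := by
  have h : ∃ b, IsLastNonzero i b := ⟨b, hb⟩
  rw [latticePred, dif_pos h, h.choose_spec.unique hb]

lemma latticePred_add_sign_smul (hb : IsLastNonzero i b) :
    latticePred i + (i b).sign • unitVec d b = i := by
  rw [latticePred_eq hb, sub_add_cancel]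

lemma latticePred_of_neg (ha : IsLastNonzero i a) (hneg : i a < 0) :
    latticePred i = i + unitVec d a := by
  rw [latticePred_eq ha, Int.sign_eq_neg_one_of_neg hneg, neg_smul, one_smul, sub_neg_eq_add]

lemma latticePred_add_unitVec_of_nonneg (hz : ∀ c, a < c → i c = 0) (hnn : 0 ≤ i a) :
    latticePred (i + unitVec d a) = i := by
  have hval : (i + unitVec d a) a = i a + 1 := by simp [unitVec]
  have ha : IsLastNonzero (i + unitVec d a) a :=
    ⟨by omega, fun c hc => by simp [unitVec, hc.ne', hz c hc]⟩
  rw [latticePred_eq ha, hval, Int.sign_eq_one_of_pos (by omega), one_smul, add_sub_cancel_right]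

lemma latticePred_add_unitVec_of_lt (hb : IsLastNonzero i b) (hab : a < b) :
    latticePred (i + unitVec d a) = latticePred i + unitVec d a := by
  have hval : (i + unitVec d a) b = i b := by simp [unitVec, hab.ne']
  rw [latticePred_eq (hb.add_unitVec hab), latticePred_eq hb, hval]
  abel

def coordNorm (s : Finset (Fin d)) (i : Zd d) : ℕ :=
  ∑ c ∈ s, (i c).natAbs

lemma coordNorm_latticePred {s : Finset (Fin d)} (hb : IsLastNonzero i b) (hs : b ∈ s) :
    coordNorm s (latticePred i) + 1 = coordNorm s i := by
  have hoff : ∀ c ∈ s.erase b, (latticePred i c).natAbs = (i c).natAbs := fun c hc => by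
    simp [latticePred_eq hb, unitVec, Finset.ne_of_mem_erase hc]
  have hat : (latticePred i b).natAbs + 1 = (i b).natAbs := by
    rw [latticePred_eq hb]
    rcases lt_or_gt_of_ne hb.1 with h | h
    · simp [unitVec, Int.sign_eq_neg_one_of_neg h]; omega
    · simp [unitVec, Int.sign_eq_one_of_pos h]; omega
  rw [coordNorm, coordNorm, ← Finset.add_sum_erase s _ hs, ← Finset.add_sum_erase s _ hs,
    Finset.sum_congr rfl hoff, ← hat]
  ring

lemma coordNorm_latticePred_lt (hi : i ≠ 0) :
    coordNorm Finset.univ (latticePred i) < coordNorm Finset.univ i := by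
  obtain ⟨b, hb⟩ := exists_isLastNonzero hi
  have := coordNorm_latticePred hb (Finset.mem_univ b)
  omega

end LatticePath

namespace IsGraphCovering

variable {d : ℕ} {W V : Type*} {T : SimpleGraph W} {H : SimpleGraph V} {p : W → V}
  (hp : IsGraphCovering T H p) {x : Zd d → V} {w₀ : W}

noncomputable def latticeLift (w₀ : W) (x : Zd d → V) (i : Zd d) : W :=
  if _ : i = 0 then w₀ else hp.liftAdj (latticeLift w₀ x (latticePred i)) (x i)
termination_by coordNorm Finset.univ i
decreasing_by exact coordNorm_latticePred_lt ‹_›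

lemma latticeLift_zero : hp.latticeLift w₀ x 0 = w₀ := by
  rw [latticeLift, dif_pos rfl]

lemma latticeLift_of_ne_zero {i : Zd d} (hi : i ≠ 0) :
    hp.latticeLift w₀ x i = hp.liftAdj (hp.latticeLift w₀ x (latticePred i)) (x i) := by
  rw [latticeLift, dif_neg hi]

lemma adj_latticePred {G : SimpleGraph V} (hx : x ∈ homShift d G) {i : Zd d} {b : Fin d}
    (hb : IsLastNonzero i b) : G.Adj (x (latticePred i)) (x i) := by
  have := homShift.adj_add_smul_unitVec hx (latticePred i) b (Int.natAbs_sign_of_ne_zero hb.1)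
  rwa [latticePred_add_sign_smul hb] at this

lemma apply_latticeLift (hx : x ∈ homShift d H) (hw₀ : p w₀ = x 0) (i : Zd d) :
    p (hp.latticeLift w₀ x i) = x i := by
  by_cases hi : i = 0
  · rw [hi, latticeLift_zero, hw₀]
  · obtain ⟨b, hb⟩ := exists_isLastNonzero hi
    rw [latticeLift_of_ne_zero hp hi]
    exact hp.apply_liftAdj (by rw [apply_latticeLift hx hw₀]; exact adj_latticePred hx hb)
termination_by coordNorm Finset.univ i
decreasing_by exact coordNorm_latticePred_lt hi

/-- Induction on the coordinates of `i` beyond `a`: when they vanish the step `i ↦ i + e_a` is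
itself a step of a lattice path, otherwise it is the far side of a square whose lift closes up
by four-cycle freeness. -/
lemma latticeLift_add_unitVec (h4 : FourCycleFree H) (hx : x ∈ homShift d H)
    (hw₀ : p w₀ = x 0) (i : Zd d) (a : Fin d) :
    hp.latticeLift w₀ x (i + unitVec d a) =
      hp.liftAdj (hp.latticeLift w₀ x i) (x (i + unitVec d a)) := by
  by_cases hz : ∀ c, a < c → i c = 0
  · rcases lt_or_ge (i a) 0 with hneg | hnn
    · have ha : IsLastNonzero i a := ⟨hneg.ne, hz⟩
      have hpl := hp.apply_latticeLift hx hw₀ (i + unitVec d a)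
      rw [latticeLift_of_ne_zero hp ha.ne_zero, latticePred_of_neg ha hneg, ← hpl,
        hp.liftAdj_liftAdj_self (hpl ▸ (homShift.adj_add_unitVec hx i a).symm)]
    · have hne : i + unitVec d a ≠ 0 := fun h => by
        have := congrFun h a
        simp [unitVec] at this
        omega
      rw [latticeLift_of_ne_zero hp hne, latticePred_add_unitVec_of_nonneg hz hnn]
  · push Not at hz
    obtain ⟨c, hac, hc⟩ := hz
    obtain ⟨b, hb⟩ := exists_isLastNonzero (fun h : i = 0 => hc (by simp [h]))
    have hab : a < b := hac.trans_le (hb.le hc)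
    have hpred := latticePred_add_unitVec_of_lt hb hab
    rw [latticeLift_of_ne_zero hp (hb.add_unitVec hab).ne_zero, hpred,
      latticeLift_add_unitVec h4 hx hw₀ (latticePred i) a, latticeLift_of_ne_zero hp hb.ne_zero]
    have hsq := homShift.adj_add_smul_unitVec hx (latticePred i + unitVec d a) b
      (Int.natAbs_sign_of_ne_zero hb.1)
    rw [add_right_comm, latticePred_add_sign_smul hb] at hsq
    refine hp.liftAdj_liftAdj_comm h4 ?_ hsq ?_ (homShift.adj_add_unitVec hx i a) <;>
      rw [hp.apply_latticeLift hx hw₀]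
    · exact homShift.adj_add_unitVec hx _ a
    · exact adj_latticePred hx hb
termination_by coordNorm (Finset.Ioi a) i
decreasing_by
  have := coordNorm_latticePred hb (Finset.mem_Ioi.mpr hab)
  omega

lemma latticeLift_mem_homShift (h4 : FourCycleFree H) (hx : x ∈ homShift d H)
    (hw₀ : p w₀ = x 0) : hp.latticeLift w₀ x ∈ homShift d T := by
  intro i j hij
  obtain ⟨a, rfl | rfl⟩ := hij.exists_eq_add_unitVec
  · rw [hp.latticeLift_add_unitVec h4 hx hw₀]
    exact hp.adj_liftAdj
      (by rw [hp.apply_latticeLift hx hw₀]; exact homShift.adj_add_unitVec hx i a)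
  · rw [hp.latticeLift_add_unitVec h4 hx hw₀]
    exact (hp.adj_liftAdj
      (by rw [hp.apply_latticeLift hx hw₀]; exact homShift.adj_add_unitVec hx j a)).symm

lemma exists_lift (hp : IsGraphCovering T H p) (h4 : FourCycleFree H) (hx : x ∈ homShift d H)
    (hw₀ : p w₀ = x 0) :
    ∃ xt ∈ homShift d T, xt 0 = w₀ ∧ ∀ i, p (xt i) = x i :=
  ⟨hp.latticeLift w₀ x, hp.latticeLift_mem_homShift h4 hx hw₀, hp.latticeLift_zero,
    hp.apply_latticeLift hx hw₀⟩

end IsGraphCovering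

section Height

variable {d : ℕ} {W V : Type*} {T : SimpleGraph W} {H : SimpleGraph V} {p : W → V}
  {h : (Zd d → V) → Zd d → Zd d → ℕ} {x : Zd d → V}

def IsHeightFunction (d : ℕ) (T : SimpleGraph W) (H : SimpleGraph V) (p : W → V)
    (h : (Zd d → V) → Zd d → Zd d → ℕ) : Prop :=
  ∀ x ∈ homShift d H, ∀ xt ∈ homShift d T,
    (∀ i, p (xt i) = x i) → ∀ i j : Zd d, h x i j = T.dist (xt i) (xt j)

lemma IsHeightFunction.triangle (hh : IsHeightFunction d T H p h) (hp : IsGraphCovering T H p)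
    (h4 : FourCycleFree H) (hsurj : Function.Surjective p) (hT : T.Connected)
    (hx : x ∈ homShift d H) (i j l : Zd d) : h x i j ≤ h x i l + h x l j := by
  obtain ⟨xt, hxt, -, hpx⟩ := hp.exists_lift h4 hx (Function.surjInv_eq hsurj (x 0))
  simp only [hh x hx xt hxt hpx]
  exact hT.dist_triangle

lemma IsHeightFunction.le_nsmul (hh : IsHeightFunction d T H p h) (hp : IsGraphCovering T H p)
    (h4 : FourCycleFree H) (hsurj : Function.Surjective p) (hT : T.Connected)
    (hx : x ∈ homShift d H) (i : Zd d) (a : Fin d) (n : ℕ) : h x i (i + n • unitVec d a) ≤ n := by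
  obtain ⟨xt, hxt, -, hpx⟩ := hp.exists_lift h4 hx (Function.surjInv_eq hsurj (x 0))
  rw [hh x hx xt hxt hpx]
  induction n with
  | zero => simp
  | succ n ih =>
    have hstep : T.dist (xt (i + n • unitVec d a)) (xt (i + (n + 1) • unitVec d a)) = 1 := by
      rw [SimpleGraph.dist_eq_one_iff_adj, succ_nsmul, ← add_assoc]
      exact homShift.adj_add_unitVec hxt _ a
    have := hT.dist_triangle (u := xt i) (v := xt (i + n • unitVec d a))
      (w := xt (i + (n + 1) • unitVec d a))
    omega

lemma IsHeightFunction.apply_shiftZd (hh : IsHeightFunction d T H p h)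
    (hp : IsGraphCovering T H p) (h4 : FourCycleFree H) (hsurj : Function.Surjective p)
    (hx : x ∈ homShift d H) (v i j : Zd d) : h (shiftZd d v x) i j = h x (i + v) (j + v) := by
  obtain ⟨xt, hxt, -, hpx⟩ := hp.exists_lift h4 hx (Function.surjInv_eq hsurj (x 0))
  rw [hh _ (shiftZd_mem_homShift hx v) _ (shiftZd_mem_homShift hxt v) (fun i => hpx (i + v)),
    hh x hx xt hxt hpx]
  rfl

lemma IsHeightFunction.le_add_shiftZd (hh : IsHeightFunction d T H p h)
    (hp : IsGraphCovering T H p) (h4 : FourCycleFree H) (hsurj : Function.Surjective p)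
    (hT : T.Connected) (hx : x ∈ homShift d H) (a : Fin d) (m n : ℕ) :
    h x 0 ((m + n) • unitVec d a) ≤
      h x 0 (m • unitVec d a) + h (shiftZd d (m • unitVec d a) x) 0 (n • unitVec d a) := by
  rw [hh.apply_shiftZd hp h4 hsurj hx, zero_add, add_comm (n • _), ← add_nsmul]
  exact hh.triangle hp h4 hsurj hT hx _ _ _

/-- The height `h x 0 (m • e_k)`, read off the lift of `x` along the `k`-th axis alone,
which makes it a function of finitely many coordinates of `x`. -/
noncomputable def axisHeight (hp : IsGraphCovering T H p) (hsurj : Function.Surjective p)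
    (k : Fin d) (m : ℕ) (x : Zd d → V) : ℕ :=
  T.dist (Function.surjInv hsurj (x 0))
    (hp.pathLift (Function.surjInv hsurj (x 0)) (fun j => x (j • unitVec d k)) m)

lemma IsHeightFunction.eq_axisHeight (hh : IsHeightFunction d T H p h)
    (hp : IsGraphCovering T H p) (h4 : FourCycleFree H) (hsurj : Function.Surjective p)
    (hx : x ∈ homShift d H) (k : Fin d) (m : ℕ) :
    h x 0 (m • unitVec d k) = axisHeight hp hsurj k m x := by
  obtain ⟨xt, hxt, hxt0, hpx⟩ := hp.exists_lift h4 hx (Function.surjInv_eq hsurj (x 0))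
  have hline := hp.eq_pathLift (y := fun j : ℕ => xt (j • unitVec d k))
    (fun n => by simpa only [succ_nsmul] using homShift.adj_add_unitVec hxt _ k) m
  simp only [zero_nsmul, hxt0] at hline
  rw [hh x hx xt hxt hpx, axisHeight, hline, hxt0]
  simp only [Function.comp_def, hpx]

lemma measurable_axisHeight [Countable V] [MeasurableSpace V] [DiscreteMeasurableSpace V]
    (hp : IsGraphCovering T H p) (hsurj : Function.Surjective p) (k : Fin d) (m : ℕ) :
    Measurable (axisHeight hp hsurj k m) := by
  have hfactor : axisHeight hp hsurj k m =
      (fun c : Fin (m + 1) → V => T.dist (Function.surjInv hsurj (c 0))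
        (hp.pathLift (Function.surjInv hsurj (c 0)) (fun j => c (Fin.ofNat (m + 1) j)) m)) ∘
      (fun x (j : Fin (m + 1)) => x ((j : ℕ) • unitVec d k)) := by
    funext x
    simp only [axisHeight, Function.comp_apply, Fin.val_zero, zero_nsmul]
    congr 1
    exact hp.pathLift_congr _ fun j hj => by rw [Fin.val_ofNat, Nat.mod_eq_of_lt (by omega)]
  rw [hfactor]
  exact Measurable.of_discrete.comp (measurable_pi_lambda _ fun j => measurable_pi_apply _)

lemma IsHeightFunction.aestronglyMeasurable [Countable V] [MeasurableSpace V]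
    [DiscreteMeasurableSpace V] (hh : IsHeightFunction d T H p h) (hp : IsGraphCovering T H p)
    (h4 : FourCycleFree H) (hsurj : Function.Surjective p) {μ : Measure (Zd d → V)}
    (hX : ∀ᵐ x ∂μ, x ∈ homShift d H) (k : Fin d) (m : ℕ) :
    AEStronglyMeasurable (fun x => (h x 0 (m • unitVec d k) : ℝ)) μ :=
  ((measurable_from_nat (f := ((↑) : ℕ → ℝ))).comp
    (measurable_axisHeight hp hsurj k m)).aestronglyMeasurable.congr
    (hX.mono fun x hx => by simp only [Function.comp_apply, hh.eq_axisHeight hp h4 hsurj hx])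

end Height

section Subadditive

lemma MeasureTheory.MeasurePreserving.integral_comp_of_aestronglyMeasurable {α β E : Type*}
    [MeasurableSpace α] [MeasurableSpace β] [NormedAddCommGroup E] [NormedSpace ℝ E]
    {μ : Measure α} {ν : Measure β} {S : α → β} {f : β → E} (hS : MeasurePreserving S μ ν)
    (hf : AEStronglyMeasurable f ν) : ∫ x, f (S x) ∂μ = ∫ y, f y ∂ν := by
  rw [← integral_map hS.measurable.aemeasurable (by rwa [hS.map_eq]), hS.map_eq]

variable {α : Type*} [MeasurableSpace α] {μ : Measure α} {S : ℕ → α → α} {F : ℕ → α → ℝ}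

lemma subadditive_integral (hS : ∀ n, MeasurePreserving (S n) μ μ)
    (hF : ∀ n, Integrable (F n) μ) (hsub : ∀ m n, ∀ᵐ x ∂μ, F (m + n) x ≤ F m x + F n (S m x)) :
    Subadditive fun n => ∫ x, F n x ∂μ := fun m n => by
  have hcomp : Integrable (fun x => F n (S m x)) μ := (hS m).integrable_comp_of_integrable (hF n)
  calc ∫ x, F (m + n) x ∂μ ≤ ∫ x, (F m x + F n (S m x)) ∂μ :=
        integral_mono_ae (hF _) ((hF m).add hcomp) (hsub m n)
    _ = ∫ x, F m x ∂μ + ∫ x, F n x ∂μ := by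
        rw [integral_add (hF m) hcomp,
          (hS m).integral_comp_of_aestronglyMeasurable (hF n).aestronglyMeasurable]

variable [IsProbabilityMeasure μ]

lemma tendsto_integral_div_of_tendsto_div (hF : ∀ n, AEStronglyMeasurable (F n) μ)
    (hF0 : ∀ n x, 0 ≤ F n x) (hFle : ∀ n, ∀ᵐ x ∂μ, F n x ≤ n) {c : ℝ}
    (hlim : ∀ᵐ x ∂μ, Tendsto (fun n : ℕ => F n x / n) atTop (nhds c)) :
    Tendsto (fun n : ℕ => (∫ x, F n x ∂μ) / n) atTop (nhds c) := by
  simp_rw [← integral_div]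
  simpa using tendsto_integral_of_dominated_convergence (F := fun n x => F n x / n) (fun _ => 1)
    (fun n => (hF n).mul_const _) (integrable_const 1)
    (fun n => (hFle n).mono fun x hx => by
      rw [Real.norm_of_nonneg (div_nonneg (hF0 n x) n.cast_nonneg)]
      exact div_le_one_of_le₀ hx n.cast_nonneg) hlim

/-- Fekete's lemma: `∫ F n / n` tends to its infimum, which must then be the limit `1`. -/
theorem ae_eq_of_subadditive_of_tendsto_div_one (hS : ∀ n, MeasurePreserving (S n) μ μ)
    (hF : ∀ n, AEStronglyMeasurable (F n) μ) (hF0 : ∀ n x, 0 ≤ F n x)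
    (hFle : ∀ n, ∀ᵐ x ∂μ, F n x ≤ n)
    (hsub : ∀ m n, ∀ᵐ x ∂μ, F (m + n) x ≤ F m x + F n (S m x))
    (hlim : ∀ᵐ x ∂μ, Tendsto (fun n : ℕ => F n x / n) atTop (nhds 1)) (n : ℕ) :
    ∀ᵐ x ∂μ, F n x = n := by
  have hint (n : ℕ) : Integrable (F n) μ :=
    (integrable_const (n : ℝ)).mono' (hF n)
      ((hFle n).mono fun x hx => by rwa [Real.norm_of_nonneg (hF0 n x)])
  have hsubadd := subadditive_integral hS hint hsub
  have hbdd : BddBelow (Set.range fun n : ℕ => (∫ x, F n x ∂μ) / n) :=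
    ⟨0, by
      rintro _ ⟨n, rfl⟩
      exact div_nonneg (integral_nonneg (hF0 n)) n.cast_nonneg⟩
  have hle : ∫ x, F n x ∂μ ≤ n := by
    simpa using integral_mono_ae (hint n) (integrable_const (n : ℝ)) (hFle n)
  have hge : (n : ℝ) ≤ ∫ x, F n x ∂μ := by
    rcases eq_or_ne n 0 with rfl | hn
    · simpa using integral_nonneg (hF0 0)
    · have := hsubadd.lim_le_div hbdd hn
      rwa [tendsto_nhds_unique (hsubadd.tendsto_lim hbdd)
          (tendsto_integral_div_of_tendsto_div hF hF0 hFle hlim),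
        le_div_iff₀ (by positivity), one_mul] at this
  exact (integral_eq_iff_of_ae_le (hint n) (integrable_const (n : ℝ)) (hFle n)).mp
    (by simpa using le_antisymm hle hge)

end Subadditive

theorem slope_one_heights_deterministic_general {d : ℕ} {W V : Type*}
    [Fintype V] [MeasurableSpace V] [DiscreteMeasurableSpace V]
    {H : SimpleGraph V} (hconn : H.Connected) (h4 : FourCycleFree H)
    {T : SimpleGraph W} (hT : T.IsTree) (p : W → V) (hp : IsGraphCovering T H p)
    (h : (Zd d → V) → Zd d → Zd d → ℕ)
    (hheight : ∀ x ∈ homShift d H, ∀ xt ∈ homShift d T,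
      (∀ i, p (xt i) = x i) → ∀ i j : Zd d, h x i j = T.dist (xt i) (xt j))
    (μ : Measure (Zd d → V)) [IsProbabilityMeasure μ]
    (hX : μ (homShift d H) = 1)
    (hinv : ∀ v : Zd d, Measure.map (shiftZd d v) μ = μ)
    (k : Fin d)
    (hslope : ∀ᵐ x ∂μ,
      Tendsto (fun n : ℕ => (h x 0 (n • unitVec d k) : ℝ) / n) atTop (nhds 1)) :
    ∀ᵐ x ∂μ, ∀ (i : Zd d) (m : ℕ), h x i (i + m • unitVec d k) = m := by
  have hTc : T.Connected := hT.connected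
  have : Nonempty W := hTc.nonempty
  have hsurj := hp.surjective hconn.preconnected
  have hh : IsHeightFunction d T H p h := hheight
  have hXae : ∀ᵐ x ∂μ, x ∈ homShift d H :=
    (ae_iff_measure_eq measurableSet_homShift.nullMeasurableSet).mpr
      (show μ (homShift d H) = μ Set.univ by rw [hX, measure_univ])
  have hshift (v : Zd d) : MeasurePreserving (shiftZd d v) μ μ :=
    ⟨measurable_shiftZd v, hinv v⟩
  have haxis : ∀ m : ℕ, ∀ᵐ x ∂μ, (h x 0 (m • unitVec d k) : ℝ) = m :=
    ae_eq_of_subadditive_of_tendsto_div_one (fun m => hshift (m • unitVec d k))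
      (hh.aestronglyMeasurable hp h4 hsurj hXae k) (fun _ _ => Nat.cast_nonneg _)
      (fun n => hXae.mono fun x hx => by
        simpa using hh.le_nsmul hp h4 hsurj hTc hx 0 k n)
      (fun m n => hXae.mono fun x hx => by
        exact_mod_cast hh.le_add_shiftZd hp h4 hsurj hTc hx k m n)
      hslope
  filter_upwards [hXae, ae_all_iff.2 fun i => ae_all_iff.2 fun m =>
    (hshift i).quasiMeasurePreserving.ae (haxis m)] with x hx hall i m
  calc h x i (i + m • unitVec d k) = h (shiftZd d i x) 0 (m • unitVec d k) := by
        rw [hh.apply_shiftZd hp h4 hsurj hx, zero_add, add_comm]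
    _ = m := by exact_mod_cast hall i m

/-- If for an ergodic shift-invariant measure `μ` on `X_H` the slope in direction
`e_k` equals `1` a.e., then the height rises deterministically:
`h_x(i, i + m e_k) = m` for all `i` and `m`, `μ`-a.e. -/
theorem slope_one_heights_deterministic {d : ℕ} (hd : 2 ≤ d) {W V : Type*}
    [Fintype V] [MeasurableSpace V] [DiscreteMeasurableSpace V]
    {H : SimpleGraph V} (hconn : H.Connected) (h4 : FourCycleFree H)
    {T : SimpleGraph W} (hT : T.IsTree) (p : W → V) (hp : IsGraphCovering T H p)
    (h : (Zd d → V) → Zd d → Zd d → ℕ)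
    (hheight : ∀ x ∈ homShift d H, ∀ xt ∈ homShift d T,
      (∀ i, p (xt i) = x i) → ∀ i j : Zd d, h x i j = T.dist (xt i) (xt j))
    (μ : Measure (Zd d → V)) [IsProbabilityMeasure μ]
    (hX : μ (homShift d H) = 1)
    (hinv : ∀ v : Zd d, Measure.map (shiftZd d v) μ = μ)
    (herg : ∀ s : Set (Zd d → V), MeasurableSet s →
      (∀ v : Zd d, shiftZd d v ⁻¹' s = s) → μ s = 0 ∨ μ s = 1)
    (k : Fin d)
    (hslope : ∀ᵐ x ∂μ,
      Tendsto (fun n : ℕ => (h x 0 (n • unitVec d k) : ℝ) / n) atTop (nhds 1)) :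
    ∀ᵐ x ∂μ, ∀ (i : Zd d) (m : ℕ), h x i (i + m • unitVec d k) = m :=
  slope_one_heights_deterministic_general hconn h4 hT p hp h hheight μ hX hinv k hslope
end
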